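/- arXiv:math-ph/0503002 — 2 statements merged into one kernel-verified Lean document; each statement's English description precedes it below -/
import Mathlib

section
/- For the Lie–Poisson algebra g^(N), the functions C_k(y) = Σ_{i=k−1}^{N−1} ⟨y_i, y_{N+k−i−2}⟩ for k = 1,…,N are Casimir functions: {C_k, y_j^β} = 0 for all basis coordinates y_j^β. -/
open Matrix

noncomputable section

/-- Gradient of `f` with respect to the `i`-th `ℝ³`-block of coordinates. -/
def gradBlock (N : ℕ) (f : (Fin N → (Fin 3 → ℝ)) → ℝ) (p : Fin N → (Fin 3 → ℝ))
    (i : Fin N) : Fin 3 → ℝ :=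
  fun a => fderiv ℝ f p (Pi.single i (Pi.single a 1))

/-- The Lie–Poisson bracket of `g^(N)`:
`{f,g}(p) = ∑_{i+j<N} ⟨ p_{i+j}, ∇_i f ∧ ∇_j g ⟩`, which is the extension by the
Leibniz rule of the coordinate brackets `{y_i^α, y_j^β} = ε^{αβ}_γ y_{i+j}^γ`
(for `i+j < N`, zero otherwise). -/
def liePoisson (N : ℕ) (f g : (Fin N → (Fin 3 → ℝ)) → ℝ)
    (p : Fin N → (Fin 3 → ℝ)) : ℝ :=
  ∑ i : Fin N, ∑ j : Fin N,
    if h : (i : ℕ) + (j : ℕ) < N then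
      (p ⟨(i : ℕ) + (j : ℕ), h⟩) ⬝ᵥ ((gradBlock N f p i) ⨯₃ (gradBlock N g p j))
    else 0

/-- `C_k(y) = ∑_{i=k-1}^{N-1} ⟨ y_i, y_{N+k-i-2} ⟩`, written as a sum over the
pairs `(i,m)` with `i + m = N + k - 2` and `i ≥ k - 1`. -/
def CasN (N k : ℕ) (p : Fin N → (Fin 3 → ℝ)) : ℝ :=
  ∑ i : Fin N, ∑ m : Fin N,
    if (i : ℕ) + (m : ℕ) + 2 = N + k ∧ k ≤ (i : ℕ) + 1 then (p i) ⬝ᵥ (p m) else 0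

/-!
Since `∇_i y_j^β = δ_{ij} e_β` and `∇_l C_k = 2 ∑_{l+m = N+k-2} y_m`, substituting `a = i + j`
gives `{C_k, y_j^β} = 2 ∑_{a+b = N+k+j-2} ⟨y_a, y_b × e_β⟩`; the constraint `a ≥ j` coming from
the substitution is automatic because `k ≥ 1`. The index set is symmetric in `(a, b)` while the
triple product changes sign when `y_a` and `y_b` are swapped, so the sum vanishes.
-/

theorem dotProduct_sum_smul_cross {ι : Type*} (s : Finset ι) (c : ι → ℝ) (u w : Fin 3 → ℝ)
    (v : ι → Fin 3 → ℝ) :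
    u ⬝ᵥ ((∑ m ∈ s, c m • v m) ⨯₃ w) = ∑ m ∈ s, c m * (u ⬝ᵥ (v m ⨯₃ w)) := by
  simp [map_sum, LinearMap.sum_apply, dotProduct_sum, dotProduct_smul]

theorem sum_sum_mul_dotProduct_cross_eq_zero {ι : Type*} [Fintype ι] (W : ι → ι → ℝ)
    (hW : ∀ a b, W a b = W b a) (v : ι → Fin 3 → ℝ) (w : Fin 3 → ℝ) :
    ∑ a, ∑ b, W a b * (v a ⬝ᵥ (v b ⨯₃ w)) = 0 := by
  have hanti : ∀ a b, v a ⬝ᵥ (v b ⨯₃ w) = -(v b ⬝ᵥ (v a ⨯₃ w)) := fun a b => by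
    rw [triple_product_permutation, ← cross_anticomm, dotProduct_neg]
  have h : ∑ a, ∑ b, W a b * (v a ⬝ᵥ (v b ⨯₃ w)) = -∑ a, ∑ b, W a b * (v a ⬝ᵥ (v b ⨯₃ w)) :=
    calc _ = ∑ b, ∑ a, W a b * (v a ⬝ᵥ (v b ⨯₃ w)) := Finset.sum_comm
      _ = _ := by
        simp only [← Finset.sum_neg_distrib]
        exact Finset.sum_congr rfl fun b _ => Finset.sum_congr rfl fun a _ => by
          rw [hanti a b, hW a b, mul_neg]
  linarith

theorem Fin.sum_dite_add_lt {M : Type*} [AddCommMonoid M] {N : ℕ} (F : Fin N → M) (j : ℕ)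
    (hF : ∀ a : Fin N, (a : ℕ) < j → F a = 0) :
    ∑ i : Fin N, (if h : (i : ℕ) + j < N then F ⟨i + j, h⟩ else 0) = ∑ a, F a := by
  set G : ℕ → M := fun n => if h : n < N then F ⟨n, h⟩ else 0
  have hlow : ∑ n ∈ Finset.range j, G n = 0 :=
    Finset.sum_eq_zero fun n hn => by
      simp only [G]
      split_ifs
      · exact hF _ (Finset.mem_range.1 hn)
      · rfl
  have hhigh : ∑ n ∈ Finset.range j, G (N + n) = 0 :=
    Finset.sum_eq_zero fun n _ => dif_neg (by omega)
  calc ∑ i : Fin N, (if h : (i : ℕ) + j < N then F ⟨i + j, h⟩ else 0)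
      = ∑ n ∈ Finset.range N, G (j + n) := by
        rw [Fin.sum_univ_eq_sum_range (fun n => G (n + j))]
        simp only [add_comm j]
    _ = ∑ n ∈ Finset.range N, G n := by
        rw [← zero_add (∑ n ∈ Finset.range N, G (j + n)), ← hlow, ← Finset.sum_range_add,
          add_comm, Finset.sum_range_add, hhigh, add_zero]
    _ = ∑ a, F a := by
        rw [← Fin.sum_univ_eq_sum_range G]
        exact Finset.sum_congr rfl fun a _ => dif_pos a.isLt

theorem fderiv_sum_sum_mul_dotProduct {N : ℕ} (A : Fin N → Fin N → ℝ)
    (p v : Fin N → Fin 3 → ℝ) :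
    fderiv ℝ (fun q : Fin N → Fin 3 → ℝ => ∑ i, ∑ m, A i m * (q i ⬝ᵥ q m)) p v
      = ∑ i, ∑ m, A i m * (v i ⬝ᵥ p m + p i ⬝ᵥ v m) := by
  simp (disch := fun_prop) only [dotProduct, fderiv_fun_sum, fderiv_const_mul, fderiv_fun_mul,
    fderiv_apply]
  simp [Finset.sum_add_distrib, mul_comm, add_comm, mul_add]

theorem single_single_dotProduct {N : ℕ} (l i : Fin N) (c : Fin 3) (w : Fin 3 → ℝ) :
    Pi.single (M := fun _ => Fin 3 → ℝ) l (Pi.single c 1) i ⬝ᵥ w = if i = l then w c else 0 := by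
  rcases eq_or_ne i l with rfl | h <;> simp [*]

theorem gradBlock_sum_sum_mul_dotProduct {N : ℕ} (A : Fin N → Fin N → ℝ)
    (p : Fin N → Fin 3 → ℝ) (l : Fin N) :
    gradBlock N (fun q => ∑ i, ∑ m, A i m * (q i ⬝ᵥ q m)) p l
      = ∑ m, (A l m + A m l) • p m := by
  ext c
  simp [gradBlock, fderiv_sum_sum_mul_dotProduct, single_single_dotProduct, dotProduct_comm (p _),
    mul_add, Finset.sum_add_distrib, add_mul]

theorem gradBlock_coord {N : ℕ} (j : Fin N) (β : Fin 3) (p : Fin N → Fin 3 → ℝ) (i : Fin N) :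
    gradBlock N (fun q => q j β) p i = if i = j then Pi.single β 1 else 0 := by
  ext c
  simp (disch := fun_prop) only [gradBlock, fderiv_apply]
  rcases eq_or_ne i j with rfl | h
  · simp [Pi.single_apply, eq_comm]
  · simp [h, h.symm]

theorem liePoisson_coord {N : ℕ} (f : (Fin N → Fin 3 → ℝ) → ℝ) (j : Fin N) (β : Fin 3)
    (p : Fin N → Fin 3 → ℝ) :
    liePoisson N f (fun q => q j β) p = ∑ i : Fin N,
      if h : (i : ℕ) + j < N then p ⟨i + j, h⟩ ⬝ᵥ (gradBlock N f p i ⨯₃ Pi.single β 1) else 0 := by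
  refine Finset.sum_congr rfl fun i _ => ?_
  rw [Finset.sum_eq_single j]
  · simp only [gradBlock_coord, if_true]
  · intro b _ hb
    simp [gradBlock_coord, hb]
  · exact fun h => absurd (Finset.mem_univ j) h

theorem CasN_eq (N k : ℕ) :
    CasN N k = fun q => ∑ i : Fin N, ∑ m : Fin N,
      (if (i : ℕ) + m + 2 = N + k then 1 else 0) * (q i ⬝ᵥ q m) := by
  funext q
  refine Finset.sum_congr rfl fun i _ => Finset.sum_congr rfl fun m _ => ?_
  have hcond : ((i : ℕ) + m + 2 = N + k ∧ k ≤ (i : ℕ) + 1) ↔ (i : ℕ) + m + 2 = N + k := by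
    have := m.isLt
    omega
  simp only [hcond, boole_mul]

theorem gradBlock_CasN (N k : ℕ) (p : Fin N → Fin 3 → ℝ) (l : Fin N) :
    gradBlock N (CasN N k) p l
      = ∑ m : Fin N, (if (l : ℕ) + m + 2 = N + k then (2 : ℝ) else 0) • p m := by
  rw [CasN_eq, gradBlock_sum_sum_mul_dotProduct]
  refine Finset.sum_congr rfl fun m _ => ?_
  rw [add_comm (m : ℕ)]
  split_ifs <;> norm_num

theorem stmt1_general (N k : ℕ) (hk1 : 1 ≤ k) (j : Fin N) (β : Fin 3)
    (p : Fin N → (Fin 3 → ℝ)) :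
    liePoisson N (CasN N k) (fun q => q j β) p = 0 := by
  set W : Fin N → Fin N → ℝ := fun a b => if (a : ℕ) + b + 2 = N + k + j then 2 else 0
  set G : Fin N → ℝ := fun a => ∑ b, W a b * (p a ⬝ᵥ (p b ⨯₃ Pi.single β 1))
  calc liePoisson N (CasN N k) (fun q => q j β) p
      = ∑ i : Fin N, if h : (i : ℕ) + j < N then G ⟨i + j, h⟩ else 0 := by
        rw [liePoisson_coord]
        refine Finset.sum_congr rfl fun i _ => dite_congr rfl (fun h => ?_) fun _ => rfl
        rw [gradBlock_CasN, dotProduct_sum_smul_cross]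
        refine Finset.sum_congr rfl fun m _ => ?_
        simp only [W, add_right_comm _ (j : ℕ), Nat.add_right_cancel_iff]
    _ = ∑ a, G a := Fin.sum_dite_add_lt G j fun a ha => Finset.sum_eq_zero fun b _ => by
        have := b.isLt
        simp only [W, if_neg (show (a : ℕ) + b + 2 ≠ N + k + j by omega), zero_mul]
    _ = 0 := sum_sum_mul_dotProduct_cross_eq_zero W (fun a b => by simp only [W, add_comm (a : ℕ)])
        p _

/-- For `k = 1, …, N` the functions `C_k` are Casimir functions of `g^(N)`:
their Poisson bracket with every coordinate function `y_j^β` vanishes. -/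
theorem stmt1 (N k : ℕ) (hk1 : 1 ≤ k) (hkN : k ≤ N) (j : Fin N) (β : Fin 3)
    (p : Fin N → (Fin 3 → ℝ)) :
    liePoisson N (CasN N k) (fun q => q j β) p = 0 :=
  stmt1_general N k hk1 j β p
end
end

section
/- The quantities H_1 = 2⟨b,y⟩, H_2 = ⟨y,y⟩ + 2⟨b,x⟩, and H_3 = 2(⟨b,z⟩ + ⟨y,x⟩) are conserved along the flow ẏ = b∧x, ẋ = y∧x + b∧z, ż = y∧z: their time derivatives along this vector field vanish identically. -/
open Matrix

/-
Differentiating each quantity along the flow leaves only triple products: those with a repeated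
factor vanish, and the remaining ones cancel in pairs by antisymmetry of the triple product.
-/

section DotProduct

variable {𝕜 ι : Type*} [NontriviallyNormedField 𝕜] [Fintype ι] {f g : 𝕜 → ι → 𝕜}
  {f' g' : ι → 𝕜} {t : 𝕜}

theorem HasDerivAt.dotProduct (hf : HasDerivAt f f' t) (hg : HasDerivAt g g' t) :
    HasDerivAt (fun s => f s ⬝ᵥ g s) (f' ⬝ᵥ g t + f t ⬝ᵥ g') t := by
  have h := HasDerivAt.fun_sum (u := Finset.univ) fun i _ =>
    (hasDerivAt_pi.1 hf i).fun_mul (hasDerivAt_pi.1 hg i)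
  simpa only [_root_.dotProduct, Finset.sum_add_distrib] using h

theorem HasDerivAt.const_dotProduct (v : ι → 𝕜) (hf : HasDerivAt f f' t) :
    HasDerivAt (fun s => v ⬝ᵥ f s) (v ⬝ᵥ f') t := by
  simpa using (hasDerivAt_const t v).dotProduct hf

end DotProduct

/-- `H₁ = 2⟨b,y⟩`, `H₂ = ⟨y,y⟩ + 2⟨b,x⟩`, `H₃ = 2(⟨b,z⟩ + ⟨y,x⟩)` are conserved
along the flow `ẏ = b∧x`, `ẋ = y∧x + b∧z`, `ż = y∧z`. -/
theorem stmt5 (b : Fin 3 → ℝ) (y x z : ℝ → (Fin 3 → ℝ))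
    (hy : ∀ t, HasDerivAt y (b ⨯₃ x t) t)
    (hx : ∀ t, HasDerivAt x (y t ⨯₃ x t + b ⨯₃ z t) t)
    (hz : ∀ t, HasDerivAt z (y t ⨯₃ z t) t) :
    (∀ t, HasDerivAt (fun s => 2 * (b ⬝ᵥ y s)) 0 t) ∧
    (∀ t, HasDerivAt (fun s => y s ⬝ᵥ y s + 2 * (b ⬝ᵥ x s)) 0 t) ∧
    (∀ t, HasDerivAt (fun s => 2 * (b ⬝ᵥ z s + y s ⬝ᵥ x s)) 0 t) := by
  refine ⟨fun t => ?_, fun t => ?_, fun t => ?_⟩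
  · refine (((hy t).const_dotProduct b).const_mul 2).congr_deriv ?_
    rw [dot_self_cross, mul_zero]
  · refine ((hy t).dotProduct (hy t)).fun_add
      (((hx t).const_dotProduct b).const_mul 2) |>.congr_deriv ?_
    rw [dotProduct_add, dot_self_cross, add_zero, dotProduct_comm, triple_product_permutation b,
      ← cross_anticomm b, dotProduct_neg]
    ring
  · refine (((hz t).const_dotProduct b).fun_add ((hy t).dotProduct (hx t))).const_mul 2
      |>.congr_deriv ?_
    rw [dotProduct_comm (b ⨯₃ x t), dot_cross_self, zero_add, dotProduct_add, dot_self_cross,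
      zero_add, triple_product_permutation (y t), ← cross_anticomm (y t), dotProduct_neg]
    ring
end
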